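/- arXiv:2302.11708 — 3 statements merged into one kernel-verified Lean document; each statement's English description precedes it below -/
import Mathlib

section
/- Submultiplicativity for arithmetic Cantor sets: with r_k := ‖1_{C_{k,A}} F_{M^k} 1_{C_{k,B}}‖_{ℓ²→ℓ²}, one has r_{k_1 + k_2} ≤ r_{k_1} · r_{k_2} for all positive integers k_1, k_2. -/
open scoped Real
open Finset

/-- The unitary discrete Fourier transform matrix on `(ℤ/N)^d`. -/
noncomputable def dftMatrix (N d : ℕ) : Matrix (Fin d → Fin N) (Fin d → Fin N) ℂ :=
  fun j ℓ => ((N : ℝ) ^ (-(d : ℝ) / 2) : ℝ) *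
    Complex.exp (2 * π * Complex.I * (∑ i, (j i : ℕ) * (ℓ i : ℕ) : ℕ) / N)

/-- The arithmetic Cantor set with alphabet `A ⊆ {0,…,M-1}^d` and `k` digits. -/
def arithCantorSet (M k d : ℕ) (A : Finset (Fin d → Fin M)) : Set (Fin d → Fin (M ^ k)) :=
  {j | ∃ a : Fin k → (Fin d → Fin M), (∀ i, a i ∈ A) ∧
    ∀ p, (j p : ℕ) = ∑ i : Fin k, (a i p : ℕ) * M ^ (i : ℕ)}

open scoped Classical in
/-- The matrix of `1_{C_{k,A}} F_N 1_{C_{k,B}}`, `N = M^k`. -/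
noncomputable def cantorFourierMatrix (M k d : ℕ) (A B : Finset (Fin d → Fin M)) :
    Matrix (Fin d → Fin (M ^ k)) (Fin d → Fin (M ^ k)) ℂ :=
  fun j ℓ => if j ∈ arithCantorSet M k d A ∧ ℓ ∈ arithCantorSet M k d B
    then dftMatrix (M ^ k) d j ℓ else 0

/-- `r_k := ‖1_{C_{k,A}} F_{M^k} 1_{C_{k,B}}‖_{ℓ²→ℓ²}`. -/
noncomputable def cantorFourierNorm (M k d : ℕ) (A B : Finset (Fin d → Fin M)) : ℝ :=
  ‖LinearMap.toContinuousLinearMap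
    (Matrix.toEuclideanLin (cantorFourierMatrix M k d A B))‖

/-! ### Auxiliary lemmas -/

lemma digitSum_lt (M : ℕ) : ∀ (k : ℕ) (c : Fin k → ℕ), (∀ i, c i < M) →
    ∑ i : Fin k, c i * M ^ (i : ℕ) < M ^ k := by
  intro k
  induction k with
  | zero => intro c hc; simp
  | succ k ih =>
    intro c hc
    rw [Fin.sum_univ_castSucc]
    simp only [Fin.val_last]
    have h1 : ∑ i : Fin k, c i.castSucc * M ^ (i : ℕ) < M ^ k :=
      ih (fun i => c i.castSucc) (fun i => hc _)
    have h2 : c (Fin.last k) * M ^ k ≤ (M - 1) * M ^ k :=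
      Nat.mul_le_mul_right _ (by have := hc (Fin.last k); omega)
    calc ∑ i : Fin k, c i.castSucc * M ^ (i : ℕ) + c (Fin.last k) * M ^ k
        < M ^ k + (M - 1) * M ^ k := Nat.add_lt_add_of_lt_of_le h1 h2
      _ = M ^ (k + 1) := by
          have hM : 0 < M := lt_of_le_of_lt (Nat.zero_le _) (hc (Fin.last k))
          have h3 : 1 + (M - 1) = M := by omega
          calc M ^ k + (M - 1) * M ^ k = (1 + (M - 1)) * M ^ k := by ring
            _ = M ^ (k + 1) := by rw [h3]; ring

/-- Glue a low-digit block and a high-digit block. -/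
def glueF {d e₁ e₂ n : ℕ} (h : e₁ * e₂ = n) (a : Fin d → Fin e₁) (b : Fin d → Fin e₂) :
    Fin d → Fin n :=
  fun p => ⟨(a p : ℕ) + e₁ * (b p : ℕ), by
    subst h
    calc (a p : ℕ) + e₁ * (b p : ℕ) < e₁ * ((b p : ℕ) + 1) := by
          have := (a p).isLt; rw [Nat.mul_add, Nat.mul_one]; omega
      _ ≤ e₁ * e₂ := Nat.mul_le_mul_left _ (b p).isLt⟩

lemma glueF_coe {d e₁ e₂ n : ℕ} (h : e₁ * e₂ = n) (a : Fin d → Fin e₁) (b : Fin d → Fin e₂)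
    (p : Fin d) : ((glueF h a b p : ℕ)) = (a p : ℕ) + e₁ * (b p : ℕ) := rfl

lemma uniq_decomp {m x y x' y' : ℕ} (hm : 0 < m) (hx : x < m) (hx' : x' < m)
    (h : x + m * y = x' + m * y') : x = x' ∧ y = y' := by
  have h1 : (x + m * y) % m = x := by
    rw [Nat.add_mul_mod_self_left, Nat.mod_eq_of_lt hx]
  have h2 : (x' + m * y') % m = x' := by
    rw [Nat.add_mul_mod_self_left, Nat.mod_eq_of_lt hx']
  have h3 : (x + m * y) / m = y := by
    rw [Nat.add_mul_div_left _ _ hm, Nat.div_eq_of_lt hx, Nat.zero_add]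
  have h4 : (x' + m * y') / m = y' := by
    rw [Nat.add_mul_div_left _ _ hm, Nat.div_eq_of_lt hx', Nat.zero_add]
  rw [h] at h1 h3
  exact ⟨h1.symm.trans h2, h3.symm.trans h4⟩

lemma sum_digits_split (M k₁ k₂ : ℕ) (c : Fin (k₁ + k₂) → ℕ) :
    ∑ i : Fin (k₁ + k₂), c i * M ^ (i : ℕ) =
      (∑ i : Fin k₁, c (Fin.castAdd k₂ i) * M ^ (i : ℕ)) +
        M ^ k₁ * ∑ i : Fin k₂, c (Fin.natAdd k₁ i) * M ^ (i : ℕ) := by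
  rw [Fin.sum_univ_add]
  congr 1
  rw [Finset.mul_sum]
  apply Finset.sum_congr rfl
  intro i _
  have h : ((Fin.natAdd k₁ i : Fin (k₁ + k₂)) : ℕ) = k₁ + (i : ℕ) := rfl
  rw [h, pow_add]; ring

lemma glue_mem {M d k₁ k₂ kk : ℕ} (hM : 0 < M) (hkk : k₁ + k₂ = kk)
    (h : M ^ k₁ * M ^ k₂ = M ^ kk) (A : Finset (Fin d → Fin M))
    (a : Fin d → Fin (M ^ k₁)) (b : Fin d → Fin (M ^ k₂)) :
    glueF h a b ∈ arithCantorSet M kk d A ↔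
      (a ∈ arithCantorSet M k₁ d A ∧ b ∈ arithCantorSet M k₂ d A) := by
  subst hkk
  have hm₁ : 0 < M ^ k₁ := Nat.pow_pos hM
  constructor
  · rintro ⟨c, hcA, hval⟩
    have key : ∀ p : Fin d,
        (a p : ℕ) = ∑ i : Fin k₁, (c (Fin.castAdd k₂ i) p : ℕ) * M ^ (i : ℕ) ∧
        (b p : ℕ) = ∑ i : Fin k₂, (c (Fin.natAdd k₁ i) p : ℕ) * M ^ (i : ℕ) := by
      intro p
      have hv := hval p
      rw [glueF_coe, sum_digits_split M k₁ k₂ (fun i => (c i p : ℕ))] at hv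
      have hS₁ : ∑ i : Fin k₁, (c (Fin.castAdd k₂ i) p : ℕ) * M ^ (i : ℕ) < M ^ k₁ :=
        digitSum_lt M k₁ _ (fun i => (c (Fin.castAdd k₂ i) p).isLt)
      exact uniq_decomp hm₁ (a p).isLt hS₁ hv
    constructor
    · exact ⟨fun i => c (Fin.castAdd k₂ i), fun i => hcA _, fun p => (key p).1⟩
    · exact ⟨fun i => c (Fin.natAdd k₁ i), fun i => hcA _, fun p => (key p).2⟩
  · rintro ⟨⟨c₁, hc₁A, hc₁⟩, ⟨c₂, hc₂A, hc₂⟩⟩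
    refine ⟨Fin.append c₁ c₂, ?_, ?_⟩
    · intro i
      refine Fin.addCases (fun i => ?_) (fun i => ?_) i
      · rw [Fin.append_left]; exact hc₁A i
      · rw [Fin.append_right]; exact hc₂A i
    · intro p
      rw [glueF_coe, sum_digits_split M k₁ k₂ (fun i => ((Fin.append c₁ c₂ i) p : ℕ))]
      have e₁ : ∀ i : Fin k₁, ((Fin.append c₁ c₂ (Fin.castAdd k₂ i)) p : ℕ) = (c₁ i p : ℕ) := by
        intro i; rw [Fin.append_left]
      have e₂ : ∀ i : Fin k₂, ((Fin.append c₁ c₂ (Fin.natAdd k₁ i)) p : ℕ) = (c₂ i p : ℕ) := by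
        intro i; rw [Fin.append_right]
      rw [hc₁ p, hc₂ p]
      congr 1
      · exact Finset.sum_congr rfl (fun i _ => by rw [e₁ i])
      · congr 1
        exact Finset.sum_congr rfl (fun i _ => by rw [e₂ i])

lemma dft_glue {M d k₁ k₂ : ℕ} (hM : 0 < M)
    (h₁ : M ^ k₁ * M ^ k₂ = M ^ (k₁ + k₂)) (h₂ : M ^ k₂ * M ^ k₁ = M ^ (k₁ + k₂))
    (a e : Fin d → Fin (M ^ k₁)) (b c : Fin d → Fin (M ^ k₂)) :
    dftMatrix (M ^ (k₁ + k₂)) d (glueF h₁ a b) (glueF h₂ c e) =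
      dftMatrix (M ^ k₁) d a e * dftMatrix (M ^ k₂) d b c *
        Complex.exp (2 * π * Complex.I * ((∑ p, (a p : ℕ) * (c p : ℕ) : ℕ) : ℂ)
          / ((M ^ (k₁ + k₂) : ℕ) : ℂ)) := by
  have hm₁ : ((M ^ k₁ : ℕ) : ℂ) ≠ 0 := Nat.cast_ne_zero.mpr (pow_ne_zero _ hM.ne')
  have hm₂ : ((M ^ k₂ : ℕ) : ℂ) ≠ 0 := Nat.cast_ne_zero.mpr (pow_ne_zero _ hM.ne')
  have key : (∑ i, ((glueF h₁ a b i : ℕ) * (glueF h₂ c e i : ℕ))) =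
      (∑ p, (a p : ℕ) * (c p : ℕ)) + M ^ k₂ * (∑ p, (a p : ℕ) * (e p : ℕ))
        + M ^ k₁ * (∑ p, (b p : ℕ) * (c p : ℕ))
        + (M ^ k₁ * M ^ k₂) * ∑ p, (b p : ℕ) * (e p : ℕ) := by
    have hterm : ∀ p, (glueF h₁ a b p : ℕ) * (glueF h₂ c e p : ℕ) =
        (a p : ℕ) * (c p : ℕ) + M ^ k₂ * ((a p : ℕ) * (e p : ℕ))
          + M ^ k₁ * ((b p : ℕ) * (c p : ℕ))
          + (M ^ k₁ * M ^ k₂) * ((b p : ℕ) * (e p : ℕ)) := by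
      intro p; rw [glueF_coe, glueF_coe]; ring
    rw [Finset.sum_congr rfl (fun p _ => hterm p), Finset.sum_add_distrib,
      Finset.sum_add_distrib, Finset.sum_add_distrib, ← Finset.mul_sum, ← Finset.mul_sum,
      ← Finset.mul_sum]
  have keyC : ((∑ i, ((glueF h₁ a b i : ℕ) * (glueF h₂ c e i : ℕ)) : ℕ) : ℂ) =
      ((∑ p, (a p : ℕ) * (c p : ℕ) : ℕ) : ℂ)
        + ((M ^ k₂ : ℕ) : ℂ) * ((∑ p, (a p : ℕ) * (e p : ℕ) : ℕ) : ℂ)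
        + ((M ^ k₁ : ℕ) : ℂ) * ((∑ p, (b p : ℕ) * (c p : ℕ) : ℕ) : ℂ)
        + ((M ^ k₁ : ℕ) : ℂ) * ((M ^ k₂ : ℕ) : ℂ)
            * ((∑ p, (b p : ℕ) * (e p : ℕ) : ℕ) : ℂ) := by
    exact_mod_cast congrArg (Nat.cast : ℕ → ℂ) key
  have hNc : ((M ^ (k₁ + k₂) : ℕ) : ℂ) = ((M ^ k₁ : ℕ) : ℂ) * ((M ^ k₂ : ℕ) : ℂ) := by
    rw [← Nat.cast_mul, h₁]
  have hconst : ((M ^ (k₁ + k₂) : ℕ) : ℝ) ^ (-(d : ℝ) / 2) =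
      ((M ^ k₁ : ℕ) : ℝ) ^ (-(d : ℝ) / 2) * ((M ^ k₂ : ℕ) : ℝ) ^ (-(d : ℝ) / 2) := by
    rw [← Real.mul_rpow (by positivity) (by positivity), ← Nat.cast_mul, h₁]
  have hexp : Complex.exp (2 * π * Complex.I *
        ((∑ i, ((glueF h₁ a b i : ℕ) * (glueF h₂ c e i : ℕ)) : ℕ) : ℂ)
        / ((M ^ (k₁ + k₂) : ℕ) : ℂ)) =
      Complex.exp (2 * π * Complex.I * ((∑ p, (a p : ℕ) * (e p : ℕ) : ℕ) : ℂ)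
          / ((M ^ k₁ : ℕ) : ℂ)) *
        Complex.exp (2 * π * Complex.I * ((∑ p, (b p : ℕ) * (c p : ℕ) : ℕ) : ℂ)
          / ((M ^ k₂ : ℕ) : ℂ)) *
        Complex.exp (2 * π * Complex.I * ((∑ p, (a p : ℕ) * (c p : ℕ) : ℕ) : ℂ)
          / ((M ^ (k₁ + k₂) : ℕ) : ℂ)) := by
    rw [← Complex.exp_add, ← Complex.exp_add]
    have h1 : (2 * (π : ℂ) * Complex.I *
          ((∑ i, ((glueF h₁ a b i : ℕ) * (glueF h₂ c e i : ℕ)) : ℕ) : ℂ)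
          / ((M ^ (k₁ + k₂) : ℕ) : ℂ)) =
        (2 * π * Complex.I * ((∑ p, (a p : ℕ) * (e p : ℕ) : ℕ) : ℂ) / ((M ^ k₁ : ℕ) : ℂ)
          + 2 * π * Complex.I * ((∑ p, (b p : ℕ) * (c p : ℕ) : ℕ) : ℂ) / ((M ^ k₂ : ℕ) : ℂ)
          + 2 * π * Complex.I * ((∑ p, (a p : ℕ) * (c p : ℕ) : ℕ) : ℂ)
            / ((M ^ (k₁ + k₂) : ℕ) : ℂ))
          + ((∑ p, (b p : ℕ) * (e p : ℕ) : ℕ) : ℂ) * (2 * π * Complex.I) := by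
      have hM' : (M : ℂ) ≠ 0 := Nat.cast_ne_zero.mpr hM.ne'
      rw [keyC, hNc]
      push_cast
      field_simp
      ring
    rw [h1, Complex.exp_add]
    have h2 : Complex.exp (((∑ p, (b p : ℕ) * (e p : ℕ) : ℕ) : ℂ) * (2 * π * Complex.I)) = 1 := by
      have := Complex.exp_int_mul_two_pi_mul_I ((∑ p, (b p : ℕ) * (e p : ℕ) : ℕ) : ℤ)
      push_cast at this
      exact_mod_cast this
    rw [h2, mul_one]
  show (((M ^ (k₁ + k₂) : ℕ) : ℝ) ^ (-(d : ℝ) / 2) : ℝ) * Complex.exp _ = _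
  rw [hconst, hexp, Complex.ofReal_mul]
  unfold dftMatrix
  ring

lemma entry_factor {M d k₁ k₂ : ℕ} (hM : 0 < M)
    (h₁ : M ^ k₁ * M ^ k₂ = M ^ (k₁ + k₂)) (h₂ : M ^ k₂ * M ^ k₁ = M ^ (k₁ + k₂))
    (A B : Finset (Fin d → Fin M))
    (a e : Fin d → Fin (M ^ k₁)) (b c : Fin d → Fin (M ^ k₂)) :
    cantorFourierMatrix M (k₁ + k₂) d A B (glueF h₁ a b) (glueF h₂ c e) =
      cantorFourierMatrix M k₁ d A B a e * cantorFourierMatrix M k₂ d A B b c *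
        Complex.exp (2 * π * Complex.I * ((∑ p, (a p : ℕ) * (c p : ℕ) : ℕ) : ℂ)
          / ((M ^ (k₁ + k₂) : ℕ) : ℂ)) := by
  classical
  have hrow := glue_mem hM rfl h₁ A a b
  have hcol := glue_mem hM (add_comm k₂ k₁) h₂ B c e
  unfold cantorFourierMatrix
  by_cases hae : a ∈ arithCantorSet M k₁ d A ∧ e ∈ arithCantorSet M k₁ d B
  · by_cases hbc : b ∈ arithCantorSet M k₂ d A ∧ c ∈ arithCantorSet M k₂ d B
    · rw [if_pos ⟨hrow.mpr ⟨hae.1, hbc.1⟩, hcol.mpr ⟨hbc.2, hae.2⟩⟩, if_pos hae, if_pos hbc]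
      exact dft_glue hM h₁ h₂ a e b c
    · rw [if_neg (fun hcon => hbc ⟨(hrow.mp hcon.1).2, (hcol.mp hcon.2).1⟩), if_neg hbc,
        mul_zero, zero_mul]
  · rw [if_neg (fun hcon => hae ⟨(hrow.mp hcon.1).1, (hcol.mp hcon.2).2⟩), if_neg hae, zero_mul,
      zero_mul]

/-- Splitting equivalence between digit blocks and the full index set. -/
def splitEquiv {M d k₁ k₂ n : ℕ} (hM : 0 < M) (h : M ^ k₁ * M ^ k₂ = n) :
    ((Fin d → Fin (M ^ k₁)) × (Fin d → Fin (M ^ k₂))) ≃ (Fin d → Fin n) where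
  toFun x := glueF h x.1 x.2
  invFun j :=
    (fun p => ⟨(j p : ℕ) % M ^ k₁, Nat.mod_lt _ (Nat.pow_pos hM)⟩,
     fun p => ⟨(j p : ℕ) / M ^ k₁, by
       exact Nat.div_lt_of_lt_mul
         (lt_of_lt_of_eq (j p).isLt (by rw [← h, Nat.mul_comm]))⟩)
  left_inv := by
    rintro ⟨x₁, x₂⟩
    have hm₁ : 0 < M ^ k₁ := Nat.pow_pos hM
    simp only [Prod.mk.injEq]
    constructor
    · funext p
      apply Fin.ext
      show ((x₁ p : ℕ) + M ^ k₁ * (x₂ p : ℕ)) % M ^ k₁ = x₁ p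
      rw [Nat.add_mul_mod_self_left, Nat.mod_eq_of_lt (x₁ p).isLt]
    · funext p
      apply Fin.ext
      show ((x₁ p : ℕ) + M ^ k₁ * (x₂ p : ℕ)) / M ^ k₁ = x₂ p
      rw [Nat.add_mul_div_left _ _ hm₁, Nat.div_eq_of_lt (x₁ p).isLt, Nat.zero_add]
  right_inv := by
    intro j
    funext p
    apply Fin.ext
    show (j p : ℕ) % M ^ k₁ + M ^ k₁ * ((j p : ℕ) / M ^ k₁) = j p
    exact Nat.mod_add_div _ _

lemma splitEquiv_apply {M d k₁ k₂ n : ℕ} (hM : 0 < M) (h : M ^ k₁ * M ^ k₂ = n)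
    (a : Fin d → Fin (M ^ k₁)) (b : Fin d → Fin (M ^ k₂)) :
    splitEquiv hM h (a, b) = glueF h a b := rfl

lemma sum_glue {M d k₁ k₂ n : ℕ} (hM : 0 < M) (h : M ^ k₁ * M ^ k₂ = n)
    (f : (Fin d → Fin n) → ℝ) :
    ∑ j, f j = ∑ a, ∑ b, f (glueF h a b) := by
  rw [← Equiv.sum_comp (splitEquiv hM h) f, Fintype.sum_prod_type]
  simp only [splitEquiv_apply]

lemma sum_glueC {M d k₁ k₂ n : ℕ} (hM : 0 < M) (h : M ^ k₁ * M ^ k₂ = n)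
    (f : (Fin d → Fin n) → ℂ) :
    ∑ j, f j = ∑ a, ∑ b, f (glueF h a b) := by
  rw [← Equiv.sum_comp (splitEquiv hM h) f, Fintype.sum_prod_type]
  simp only [splitEquiv_apply]

lemma norm_matVec {n : Type*} [Fintype n] [DecidableEq n] (Mat : Matrix n n ℂ) (v : EuclideanSpace ℂ n) :
    ‖LinearMap.toContinuousLinearMap (Matrix.toEuclideanLin Mat) v‖ =
      Real.sqrt (∑ j, ‖∑ ℓ, Mat j ℓ * v ℓ‖ ^ 2) := by
  rw [EuclideanSpace.norm_eq]
  congr 1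

lemma stepA (M k d : ℕ) (A B : Finset (Fin d → Fin M)) (u : (Fin d → Fin (M ^ k)) → ℂ) :
    ∑ j, ‖∑ ℓ, cantorFourierMatrix M k d A B j ℓ * u ℓ‖ ^ 2 ≤
      (cantorFourierNorm M k d A B) ^ 2 * ∑ ℓ, ‖u ℓ‖ ^ 2 := by
  set T := LinearMap.toContinuousLinearMap (Matrix.toEuclideanLin (cantorFourierMatrix M k d A B))
    with hT
  set U : EuclideanSpace ℂ (Fin d → Fin (M ^ k)) := (WithLp.equiv 2 _).symm u with hU
  have hUl : ∀ ℓ, U ℓ = u ℓ := fun ℓ => rfl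
  have hnn : (0:ℝ) ≤ ∑ ℓ, ‖u ℓ‖ ^ 2 := Finset.sum_nonneg (fun ℓ _ => sq_nonneg _)
  have hnn' : (0:ℝ) ≤ ∑ j, ‖∑ ℓ, cantorFourierMatrix M k d A B j ℓ * u ℓ‖ ^ 2 :=
    Finset.sum_nonneg (fun j _ => sq_nonneg _)
  have hU2 : ‖U‖ = Real.sqrt (∑ ℓ, ‖u ℓ‖ ^ 2) := by
    rw [EuclideanSpace.norm_eq]
    congr 1
  have hTU : ‖T U‖ = Real.sqrt (∑ j, ‖∑ ℓ, cantorFourierMatrix M k d A B j ℓ * u ℓ‖ ^ 2) := by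
    rw [hT, norm_matVec]
    congr 1
  have h1 := T.le_opNorm U
  rw [hTU, hU2] at h1
  have hr : cantorFourierNorm M k d A B = ‖T‖ := rfl
  calc ∑ j, ‖∑ ℓ, cantorFourierMatrix M k d A B j ℓ * u ℓ‖ ^ 2
      = (Real.sqrt (∑ j, ‖∑ ℓ, cantorFourierMatrix M k d A B j ℓ * u ℓ‖ ^ 2)) ^ 2 :=
        (Real.sq_sqrt hnn').symm
    _ ≤ (‖T‖ * Real.sqrt (∑ ℓ, ‖u ℓ‖ ^ 2)) ^ 2 :=
        pow_le_pow_left₀ (Real.sqrt_nonneg _) h1 2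
    _ = (cantorFourierNorm M k d A B) ^ 2 * ∑ ℓ, ‖u ℓ‖ ^ 2 := by
        rw [hr, mul_pow, Real.sq_sqrt hnn]

lemma norm_phase (x n : ℕ) : ‖Complex.exp (2 * π * Complex.I * (x : ℂ) / (n : ℂ))‖ = 1 := by
  have h : (2 * (π : ℂ) * Complex.I * x / n) = ((2 * π * x / n : ℝ) : ℂ) * Complex.I := by
    push_cast; ring
  rw [h, Complex.norm_exp_ofReal_mul_I]

/-- Submultiplicativity for arithmetic Cantor sets: `r_{k₁+k₂} ≤ r_{k₁} r_{k₂}`. -/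
theorem cantorFourierNorm_submultiplicative (M d : ℕ) (hM : 3 ≤ M)
    (A B : Finset (Fin d → Fin M)) (hA : A.Nonempty) (hB : B.Nonempty)
    (k₁ k₂ : ℕ) (hk₁ : 0 < k₁) (hk₂ : 0 < k₂) :
    cantorFourierNorm M (k₁ + k₂) d A B ≤
      cantorFourierNorm M k₁ d A B * cantorFourierNorm M k₂ d A B := by
  classical
  have hM0 : 0 < M := by omega
  have h₁ : M ^ k₁ * M ^ k₂ = M ^ (k₁ + k₂) := (pow_add M k₁ k₂).symm
  have h₂ : M ^ k₂ * M ^ k₁ = M ^ (k₁ + k₂) := by rw [← pow_add, add_comm]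
  have hr₁ : 0 ≤ cantorFourierNorm M k₁ d A B := norm_nonneg _
  have hr₂ : 0 ≤ cantorFourierNorm M k₂ d A B := norm_nonneg _
  unfold cantorFourierNorm
  apply ContinuousLinearMap.opNorm_le_bound _ (mul_nonneg hr₁ hr₂)
  intro v
  rw [norm_matVec]
  set r₁ := cantorFourierNorm M k₁ d A B with hr₁def
  set r₂ := cantorFourierNorm M k₂ d A B with hr₂def
  set Mat := cantorFourierMatrix M (k₁ + k₂) d A B with hMatdef
  set ph : (Fin d → Fin (M ^ k₁)) → (Fin d → Fin (M ^ k₂)) → ℂ := fun a c =>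
    Complex.exp (2 * π * Complex.I * ((∑ p, (a p : ℕ) * (c p : ℕ) : ℕ) : ℂ)
      / ((M ^ (k₁ + k₂) : ℕ) : ℂ)) with hphdef
  set w : (Fin d → Fin (M ^ k₁)) → (Fin d → Fin (M ^ k₂)) → ℂ := fun a c =>
    ∑ e, cantorFourierMatrix M k₁ d A B a e * v (glueF h₂ c e) with hwdef
  have hvnn : (0:ℝ) ≤ ∑ ℓ, ‖v ℓ‖ ^ 2 := Finset.sum_nonneg (fun ℓ _ => sq_nonneg _)
  have hv : ∑ ℓ, ‖v ℓ‖ ^ 2 = ‖v‖ ^ 2 := by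
    rw [EuclideanSpace.norm_eq, Real.sq_sqrt hvnn]
  have hcol : ∀ a b, ∑ ℓ, Mat (glueF h₁ a b) ℓ * v ℓ =
      ∑ c, cantorFourierMatrix M k₂ d A B b c * (ph a c * w a c) := by
    intro a b
    rw [sum_glueC hM0 h₂ (fun ℓ => Mat (glueF h₁ a b) ℓ * v ℓ)]
    apply Finset.sum_congr rfl
    intro c _
    rw [hwdef, Finset.mul_sum, Finset.mul_sum]
    apply Finset.sum_congr rfl
    intro e _
    rw [hMatdef, entry_factor hM0 h₁ h₂ A B a e b c]
    ring
  have hS : ∑ j, ‖∑ ℓ, Mat j ℓ * v ℓ‖ ^ 2 ≤ r₂ ^ 2 * (r₁ ^ 2 * ∑ ℓ, ‖v ℓ‖ ^ 2) := by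
    calc ∑ j, ‖∑ ℓ, Mat j ℓ * v ℓ‖ ^ 2
        = ∑ a, ∑ b, ‖∑ c, cantorFourierMatrix M k₂ d A B b c * (ph a c * w a c)‖ ^ 2 := by
          rw [sum_glue hM0 h₁ (fun j => ‖∑ ℓ, Mat j ℓ * v ℓ‖ ^ 2)]
          exact Finset.sum_congr rfl (fun a _ => Finset.sum_congr rfl
            (fun b _ => by rw [hcol a b]))
      _ ≤ ∑ a, r₂ ^ 2 * ∑ c, ‖ph a c * w a c‖ ^ 2 :=
          Finset.sum_le_sum (fun a _ => stepA M k₂ d A B (fun c => ph a c * w a c))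
      _ = r₂ ^ 2 * ∑ a, ∑ c, ‖w a c‖ ^ 2 := by
          rw [← Finset.mul_sum]
          congr 1
          refine Finset.sum_congr rfl (fun a _ => Finset.sum_congr rfl (fun c _ => ?_))
          rw [norm_mul, hphdef, norm_phase, one_mul]
      _ = r₂ ^ 2 * ∑ c, ∑ a, ‖w a c‖ ^ 2 := by rw [Finset.sum_comm]
      _ ≤ r₂ ^ 2 * ∑ c, r₁ ^ 2 * ∑ e, ‖v (glueF h₂ c e)‖ ^ 2 := by
          refine mul_le_mul_of_nonneg_left (Finset.sum_le_sum (fun c _ => ?_)) (sq_nonneg r₂)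
          exact stepA M k₁ d A B (fun e => v (glueF h₂ c e))
      _ = r₂ ^ 2 * (r₁ ^ 2 * ∑ ℓ, ‖v ℓ‖ ^ 2) := by
          rw [← Finset.mul_sum]
          congr 2
          rw [sum_glue hM0 h₂ (fun ℓ => ‖v ℓ‖ ^ 2)]
  calc Real.sqrt (∑ j, ‖∑ ℓ, Mat j ℓ * v ℓ‖ ^ 2)
      ≤ Real.sqrt ((r₁ * r₂ * ‖v‖) ^ 2) := by
        apply Real.sqrt_le_sqrt
        calc ∑ j, ‖∑ ℓ, Mat j ℓ * v ℓ‖ ^ 2 ≤ r₂ ^ 2 * (r₁ ^ 2 * ∑ ℓ, ‖v ℓ‖ ^ 2) := hS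
          _ = (r₁ * r₂ * ‖v‖) ^ 2 := by rw [hv]; ring
    _ = r₁ * r₂ * ‖v‖ := Real.sqrt_sq (by positivity)
end

section
/- If X, Y ⊆ R^d are Φ-nonorthogonal with constant c_N from scales (α_0^X, α_0^Y) to (α_1^X, α_1^Y), then the h-neighborhoods X_h = X + B(0,h), Y_h = Y + B(0,h) are Φ-nonorthogonal with constant c_N/4 from scales (max(2h, α_0^X + h), max(2h, α_0^Y + h)) to (α_1^X, α_1^Y), provided the relevant scale intervals are nonempty. -/
open Metric
open scoped Pointwise

/-- If `(X, Y)` is `Φ`-nonorthogonal with constant `c_N` from scales `(α₀ˣ, α₀ʸ)` to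
`(α₁ˣ, α₁ʸ)`, then the `h`-neighborhoods `X + B(0,h)`, `Y + B(0,h)` are `Φ`-nonorthogonal
with constant `c_N/4` from scales `(max(2h, α₀ˣ+h), max(2h, α₀ʸ+h))` to `(α₁ˣ, α₁ʸ)`. -/
theorem nonorthogonal_thickening {d : ℕ}
    (Φ : EuclideanSpace ℝ (Fin d) × EuclideanSpace ℝ (Fin d) → ℝ)
    (hΦ : ContDiff ℝ 2 Φ)
    (X Y : Set (EuclideanSpace ℝ (Fin d)))
    (cN h a0X a0Y a1X a1Y : ℝ) (hcN : 0 < cN) (hcN1 : cN ≤ 1) (hh : 0 < h)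
    (hno : ∀ x₀ ∈ X, ∀ y₀ ∈ Y, ∀ rX rY : ℝ,
      a0X < rX → rX < a1X → a0Y < rY → rY < a1Y →
      ∃ x₁ ∈ X ∩ ball x₀ rX, ∃ x₂ ∈ X ∩ ball x₀ rX,
      ∃ y₁ ∈ Y ∩ ball y₀ rY, ∃ y₂ ∈ Y ∩ ball y₀ rY,
        cN * rX * rY ≤ |Φ (x₁, y₁) - Φ (x₂, y₁) - Φ (x₁, y₂) + Φ (x₂, y₂)|) :
    ∀ x₀ ∈ X + ball (0 : EuclideanSpace ℝ (Fin d)) h, ∀ y₀ ∈ Y + ball (0 : EuclideanSpace ℝ (Fin d)) h, ∀ rX rY : ℝ,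
      max (2 * h) (a0X + h) < rX → rX < a1X →
      max (2 * h) (a0Y + h) < rY → rY < a1Y →
      ∃ x₁ ∈ (X + ball (0 : EuclideanSpace ℝ (Fin d)) h) ∩ ball x₀ rX, ∃ x₂ ∈ (X + ball (0 : EuclideanSpace ℝ (Fin d)) h) ∩ ball x₀ rX,
      ∃ y₁ ∈ (Y + ball (0 : EuclideanSpace ℝ (Fin d)) h) ∩ ball y₀ rY, ∃ y₂ ∈ (Y + ball (0 : EuclideanSpace ℝ (Fin d)) h) ∩ ball y₀ rY,
        (cN / 4) * rX * rY ≤ |Φ (x₁, y₁) - Φ (x₂, y₁) - Φ (x₁, y₂) + Φ (x₂, y₂)| := by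
  rintro x₀ hx₀ y₀ hy₀ rX rY hrX1 hrX2 hrY1 hrY2
  obtain ⟨x', hx', ex, hex, hxe⟩ := hx₀
  obtain ⟨y', hy', ey, hey, hye⟩ := hy₀
  have h2X : 2 * h < rX := lt_of_le_of_lt (le_max_left _ _) hrX1
  have h2Y : 2 * h < rY := lt_of_le_of_lt (le_max_left _ _) hrY1
  have haX : a0X < rX - h := by
    have := lt_of_le_of_lt (le_max_right _ _) hrX1; linarith
  have haY : a0Y < rY - h := by
    have := lt_of_le_of_lt (le_max_right _ _) hrY1; linarith
  obtain ⟨x₁, ⟨hx₁X, hx₁b⟩, x₂, ⟨hx₂X, hx₂b⟩, y₁, ⟨hy₁Y, hy₁b⟩, y₂, ⟨hy₂Y, hy₂b⟩, hkey⟩ :=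
    hno x' hx' y' hy' (rX - h) (rY - h) haX (by linarith) haY (by linarith)
  have hmemX : ∀ z, z ∈ X → z ∈ X + ball (0 : EuclideanSpace ℝ (Fin d)) h :=
    fun z hz => ⟨z, hz, 0, mem_ball_self hh, add_zero z⟩
  have hmemY : ∀ z, z ∈ Y → z ∈ Y + ball (0 : EuclideanSpace ℝ (Fin d)) h :=
    fun z hz => ⟨z, hz, 0, mem_ball_self hh, add_zero z⟩
  have hdx : dist x' x₀ < h := by
    rw [← hxe]; simp only [dist_eq_norm]
    simpa using mem_ball_zero_iff.mp hex
  have hdy : dist y' y₀ < h := by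
    rw [← hye]; simp only [dist_eq_norm]
    simpa using mem_ball_zero_iff.mp hey
  have hballX : ∀ z, z ∈ ball x' (rX - h) → z ∈ ball x₀ rX := fun z hz => by
    have := mem_ball.mp hz
    exact mem_ball.mpr (by calc dist z x₀ ≤ dist z x' + dist x' x₀ := dist_triangle _ _ _
      _ < (rX - h) + h := by linarith
      _ = rX := by ring)
  have hballY : ∀ z, z ∈ ball y' (rY - h) → z ∈ ball y₀ rY := fun z hz => by
    have := mem_ball.mp hz
    exact mem_ball.mpr (by calc dist z y₀ ≤ dist z y' + dist y' y₀ := dist_triangle _ _ _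
      _ < (rY - h) + h := by linarith
      _ = rY := by ring)
  refine ⟨x₁, ⟨hmemX _ hx₁X, hballX _ hx₁b⟩, x₂, ⟨hmemX _ hx₂X, hballX _ hx₂b⟩,
    y₁, ⟨hmemY _ hy₁Y, hballY _ hy₁b⟩, y₂, ⟨hmemY _ hy₂Y, hballY _ hy₂b⟩, ?_⟩
  refine le_trans ?_ hkey
  have h1 : rX / 2 ≤ rX - h := by linarith
  have h2 : rY / 2 ≤ rY - h := by linarith
  have hrXpos : 0 < rX := by linarith
  have hrYpos : 0 < rY := by linarith
  calc cN / 4 * rX * rY = cN * (rX / 2) * (rY / 2) := by ring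
    _ ≤ cN * (rX - h) * (rY - h) := by
        have : 0 < rX - h := by linarith
        apply mul_le_mul (mul_le_mul le_rfl h1 (by linarith) hcN.le) h2 (by linarith)
        positivity
end

section
/- Pigeonhole for angles: let u, v ∈ R^2 be nonzero vectors with θ < ∠(u, v) < π - θ for some θ ∈ (0, π/2), where ∠ denotes the angle between vectors, and let w ∈ R^2 be a unit vector. Then at least one of |cos ∠(u,w)|, |cos ∠(v,w)| is at least sin(θ/2). -/
open Real InnerProductGeometry

private lemma angle_pigeonhole_aux (s A B p q p' q' : ℝ)
    (hs0 : 0 < s) (hs1 : s < 1) (hA : 0 < A) (hB : 0 < B)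
    (hpq : p ^ 2 + q ^ 2 = A ^ 2) (hpq' : p' ^ 2 + q' ^ 2 = B ^ 2)
    (hpA : |p| < s * A) (hpB : |p'| < s * B)
    (hbound : |p * p' + q * q'| < (1 - 2 * s ^ 2) * (A * B)) : False := by
  have hqq : |q * q'| ≤ |p * p' + q * q'| + |p * p'| := by
    calc |q * q'| = |(p * p' + q * q') + (-(p * p'))| := by ring_nf
      _ ≤ |p * p' + q * q'| + |(-(p * p'))| := abs_add_le _ _
      _ = |p * p' + q * q'| + |p * p'| := by rw [abs_neg]
  have hppB : |p * p'| < s * A * (s * B) := by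
    rw [abs_mul]
    exact mul_lt_mul'' hpA hpB (abs_nonneg _) (abs_nonneg _)
  have hqq2 : |q * q'| < (1 - s ^ 2) * (A * B) := by
    calc |q * q'| ≤ |p * p' + q * q'| + |p * p'| := hqq
      _ < (1 - 2 * s ^ 2) * (A * B) + s * A * (s * B) := by linarith
      _ = (1 - s ^ 2) * (A * B) := by ring
  have hp2 : p ^ 2 < s ^ 2 * A ^ 2 := by
    have h := mul_lt_mul'' hpA hpA (abs_nonneg _) (abs_nonneg _)
    rw [abs_mul_abs_self] at h
    nlinarith [h]
  have hp'2 : p' ^ 2 < s ^ 2 * B ^ 2 := by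
    have h := mul_lt_mul'' hpB hpB (abs_nonneg _) (abs_nonneg _)
    rw [abs_mul_abs_self] at h
    nlinarith [h]
  have hq2 : (1 - s ^ 2) * A ^ 2 < q ^ 2 := by nlinarith [hp2, hpq]
  have hq'2 : (1 - s ^ 2) * B ^ 2 < q' ^ 2 := by nlinarith [hp'2, hpq']
  have h1s : (0:ℝ) < 1 - s ^ 2 := by nlinarith
  have hZ : (q * q') ^ 2 < ((1 - s ^ 2) * (A * B)) ^ 2 := by
    have h := pow_lt_pow_left₀ hqq2 (abs_nonneg _) two_ne_zero
    rwa [sq_abs] at h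
  have hZ2 : ((1 - s ^ 2) * A ^ 2) * ((1 - s ^ 2) * B ^ 2) < q ^ 2 * q' ^ 2 := by
    have hl : (0:ℝ) ≤ (1 - s ^ 2) * A ^ 2 := by positivity
    have hr : (0:ℝ) < (1 - s ^ 2) * B ^ 2 := by positivity
    exact mul_lt_mul' hq2.le hq'2 hr.le (hl.trans_lt hq2)
  nlinarith [hZ, hZ2]

/-- Pigeonhole for angles in the plane: if the angle between nonzero `u, v ∈ ℝ²` lies in
`(θ, π - θ)`, then for any unit vector `w`, at least one of `|cos ∠(u,w)|`, `|cos ∠(v,w)|`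
is at least `sin(θ/2)`. -/
theorem angle_pigeonhole (u v w : EuclideanSpace ℝ (Fin 2))
    (hu : u ≠ 0) (hv : v ≠ 0) (hw : ‖w‖ = 1)
    (θ : ℝ) (hθ0 : 0 < θ) (hθ2 : θ < π / 2)
    (h1 : θ < angle u v) (h2 : angle u v < π - θ) :
    Real.sin (θ / 2) ≤ max |Real.cos (angle u w)| |Real.cos (angle v w)| := by
  by_contra hcon
  push_neg at hcon
  rw [max_lt_iff] at hcon
  obtain ⟨hcu, hcv⟩ := hcon
  set s := Real.sin (θ / 2) with hs_def
  have hpi := Real.pi_pos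
  have hs0 : 0 < s := Real.sin_pos_of_pos_of_lt_pi (by linarith) (by linarith)
  have hcosθ : Real.cos θ = 1 - 2 * s ^ 2 := by
    rw [show θ = 2 * (θ / 2) by ring, Real.cos_two_mul]
    nlinarith [Real.sin_sq_add_cos_sq (θ / 2)]
  have hcθ0 : 0 < Real.cos θ := Real.cos_pos_of_mem_Ioo ⟨by linarith, hθ2⟩
  have hs1 : s < 1 := by nlinarith
  -- cos of angle u v is small in absolute value
  have hang0 := angle_nonneg u v
  have hangpi := angle_le_pi u v
  have hcav : |Real.cos (angle u v)| < Real.cos θ := by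
    rw [abs_lt]
    constructor
    · have := Real.cos_lt_cos_of_nonneg_of_le_pi hang0 (by linarith) h2
      rw [Real.cos_pi_sub] at this
      linarith
    · exact Real.cos_lt_cos_of_nonneg_of_le_pi hθ0.le hangpi h1
  -- coordinates
  have hA : (0:ℝ) < ‖u‖ := norm_pos_iff.mpr hu
  have hB : (0:ℝ) < ‖v‖ := norm_pos_iff.mpr hv
  set A := ‖u‖
  set B := ‖v‖
  have hiuu : (inner ℝ u u : ℝ) = u 0 * u 0 + u 1 * u 1 := by
    rw [PiLp.inner_apply]; simp [Fin.sum_univ_two] <;> ring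
  have hivv : (inner ℝ v v : ℝ) = v 0 * v 0 + v 1 * v 1 := by
    rw [PiLp.inner_apply]; simp [Fin.sum_univ_two] <;> ring
  have hiww : (inner ℝ w w : ℝ) = w 0 * w 0 + w 1 * w 1 := by
    rw [PiLp.inner_apply]; simp [Fin.sum_univ_two] <;> ring
  have hiuv : (inner ℝ u v : ℝ) = u 0 * v 0 + u 1 * v 1 := by
    rw [PiLp.inner_apply]; simp [Fin.sum_univ_two] <;> ring
  have hiuw : (inner ℝ u w : ℝ) = u 0 * w 0 + u 1 * w 1 := by
    rw [PiLp.inner_apply]; simp [Fin.sum_univ_two] <;> ring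
  have hivw : (inner ℝ v w : ℝ) = v 0 * w 0 + v 1 * w 1 := by
    rw [PiLp.inner_apply]; simp [Fin.sum_univ_two] <;> ring
  have hu2 : A ^ 2 = u 0 ^ 2 + u 1 ^ 2 := by
    rw [← real_inner_self_eq_norm_sq, hiuu]; ring
  have hv2 : B ^ 2 = v 0 ^ 2 + v 1 ^ 2 := by
    rw [← real_inner_self_eq_norm_sq, hivv]; ring
  have hw2 : w 0 ^ 2 + w 1 ^ 2 = 1 := by
    have : ‖w‖ ^ 2 = (1:ℝ) := by rw [hw]; norm_num
    rw [← real_inner_self_eq_norm_sq, hiww] at this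
    linarith [this]
  set p := u 0 * w 0 + u 1 * w 1 with hp_def
  set q := u 1 * w 0 - u 0 * w 1 with hq_def
  set p' := v 0 * w 0 + v 1 * w 1 with hp'_def
  set q' := v 1 * w 0 - v 0 * w 1 with hq'_def
  have hpq : p ^ 2 + q ^ 2 = A ^ 2 := by
    rw [hu2]; linear_combination (u 0 ^ 2 + u 1 ^ 2) * hw2
  have hpq' : p' ^ 2 + q' ^ 2 = B ^ 2 := by
    rw [hv2]; linear_combination (v 0 ^ 2 + v 1 ^ 2) * hw2
  have hinner : (inner ℝ u v : ℝ) = p * p' + q * q' := by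
    rw [hiuv]; linear_combination (u 0 * v 0 + u 1 * v 1) * hw2.symm
  -- bounds on |p|, |p'|
  have hcuw : Real.cos (angle u w) = p / A := by
    rw [cos_angle, hiuw, hw]; simp [A]
  have hcvw : Real.cos (angle v w) = p' / B := by
    rw [cos_angle, hivw, hw]; simp [B]
  have hpA : |p| < s * A := by
    rw [hcuw, abs_div, abs_of_pos hA, div_lt_iff₀ hA] at hcu
    linarith
  have hpB : |p'| < s * B := by
    rw [hcvw, abs_div, abs_of_pos hB, div_lt_iff₀ hB] at hcv
    linarith
  -- bound on |inner u v|
  have hiuv_bound : |p * p' + q * q'| < Real.cos θ * (A * B) := by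
    have h := cos_angle_mul_norm_mul_norm u v
    rw [hinner] at h
    calc |p * p' + q * q'| = |Real.cos (angle u v)| * (A * B) := by
          rw [← h, abs_mul, abs_of_pos (mul_pos hA hB)]
      _ < Real.cos θ * (A * B) := by
          exact mul_lt_mul_of_pos_right hcav (mul_pos hA hB)
  refine angle_pigeonhole_aux s A B p q p' q' hs0 hs1 hA hB hpq hpq' hpA hpB ?_
  rw [← hcosθ]
  exact hiuv_bound
end
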